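/- arXiv:math/0612335 — 3 statements merged into one kernel-verified Lean document; each statement's English description precedes it below -/
import Mathlib

section
/- Let Σ be a compact metric space, P a Borel measurable map defined on a Borel subset dom(P) ⊆ Σ, and let M_P(Σ) denote the set of Borel probability measures on Σ invariant under P. Suppose φ : Σ → ℝ is continuous, c > 0, and ∫ φ dν < -c for every ν ∈ M_P(Σ), and suppose every weak* accumulation point of Birkhoff averages of Dirac measures along P-orbits is P-invariant. Then there exists N ∈ ℕ such that for every n > N and every x ∈ dom(P^{n-1}), (1/n) ∑_{k=0}^{n-1} φ(P^k(x)) < -c. -/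
/-!
If the conclusion failed, there would be arbitrarily long orbit segments along which the Birkhoff
averages of `φ` stay `≥ -c`. Their empirical measures lie in the compact metrizable space of
probability measures on `X`, so a subsequence converges weak* to some `ν`. By hypothesis `ν` is
`P`-invariant, yet `∫ φ dν ≥ -c` as a limit of averages `≥ -c`.
-/

open MeasureTheory Filter Topology Set Function
open scoped ENNReal

namespace MeasureTheory

section BirkhoffMeasure

variable {X : Type*} [MeasurableSpace X]

noncomputable def birkhoffMeasure (P : X → X) (x : X) (n : ℕ) : Measure X :=
  (n : ℝ≥0∞)⁻¹ • ∑ k ∈ Finset.range n, Measure.dirac (P^[k] x)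

lemma isProbabilityMeasure_birkhoffMeasure (P : X → X) (x : X) {n : ℕ} (hn : n ≠ 0) :
    IsProbabilityMeasure (birkhoffMeasure P x n) := by
  constructor
  simp [birkhoffMeasure, ENNReal.inv_mul_cancel, hn]

lemma integral_birkhoffMeasure [MeasurableSingletonClass X] (P : X → X) (x : X) (n : ℕ)
    (f : X → ℝ) :
    ∫ y, f y ∂birkhoffMeasure P x n = (∑ k ∈ Finset.range n, f (P^[k] x)) / n := by
  rw [birkhoffMeasure, integral_smul_measure,
    integral_finsetSum_measure fun k _ => integrable_dirac enorm_lt_top]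
  simp [integral_dirac, div_eq_inv_mul]

end BirkhoffMeasure

lemma exists_subseq_tendsto_integral_of_compactSpace {X : Type*} [MetricSpace X]
    [CompactSpace X] [MeasurableSpace X] [BorelSpace X]
    (μ : ℕ → Measure X) [∀ j, IsProbabilityMeasure (μ j)] :
    ∃ ν : Measure X, IsProbabilityMeasure ν ∧ ∃ ψ : ℕ → ℕ, StrictMono ψ ∧
      ∀ f : C(X, ℝ), Tendsto (fun j => ∫ y, f y ∂μ (ψ j)) atTop (𝓝 (∫ y, f y ∂ν)) := by
  obtain ⟨ν, -, ψ, hψ, hlim⟩ :=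
    (isCompact_univ (X := ProbabilityMeasure X)).tendsto_subseq
      (x := fun j => ⟨μ j, inferInstance⟩) fun _ => mem_univ _
  exact ⟨ν, inferInstance, ψ, hψ, fun f =>
    ProbabilityMeasure.tendsto_iff_forall_integral_tendsto.mp hlim
      (BoundedContinuousFunction.mkOfCompact f)⟩

end MeasureTheory

theorem stmt0_general
    {X : Type*} [MetricSpace X] [CompactSpace X] [MeasurableSpace X] [BorelSpace X]
    (P : X → X) (dom : Set X)
    (φ : X → ℝ) (hφ : Continuous φ) (c : ℝ)
    (hint : ∀ ν : Measure X, IsProbabilityMeasure ν → ν.map P = ν →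
      ∫ x, φ x ∂ν < -c)
    (hacc : ∀ μ : Measure X, IsProbabilityMeasure μ →
      ∀ (n : ℕ → ℕ) (x : ℕ → X),
        (∀ j, 1 ≤ n j) →
        (∀ j, ∀ k, k < n j - 1 → P^[k] (x j) ∈ dom) →
        Tendsto n atTop atTop →
        (∀ f : C(X, ℝ), Tendsto
          (fun j => (∑ k ∈ Finset.range (n j), f (P^[k] (x j))) / (n j : ℝ))
          atTop (𝓝 (∫ x, f x ∂μ))) →
        μ.map P = μ) :
    ∃ N : ℕ, ∀ n : ℕ, N < n → ∀ x : X,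
      (∀ k, k < n - 1 → P^[k] x ∈ dom) →
      (∑ k ∈ Finset.range n, φ (P^[k] x)) / (n : ℝ) < -c := by
  by_contra! hcon
  choose n hn x hdom havg using hcon
  have hn_pos : ∀ j, 0 < n j := fun j => (Nat.zero_le j).trans_lt (hn j)
  have hprob := fun j => isProbabilityMeasure_birkhoffMeasure P (x j) (hn_pos j).ne'
  obtain ⟨ν, hν, ψ, hψ, hlim⟩ :=
    exists_subseq_tendsto_integral_of_compactSpace fun j => birkhoffMeasure P (x j) (n j)
  simp only [integral_birkhoffMeasure] at hlim
  have hν_inv : ν.map P = ν :=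
    hacc ν hν (n ∘ ψ) (x ∘ ψ) (fun j => hn_pos (ψ j)) (fun j => hdom (ψ j))
      (tendsto_atTop_mono (fun j => (hψ.id_le j).trans (hn (ψ j)).le) tendsto_id) hlim
  have hφ_lim : -c ≤ ∫ y, φ y ∂ν :=
    ge_of_tendsto' (hlim ⟨φ, hφ⟩) fun j => havg (ψ j)
  exact (hint ν hν hν_inv).not_ge hφ_lim

/-- Proposition `cphi`: if every invariant probability measure integrates a continuous
function `φ` below `-c`, and every weak* accumulation point of Birkhoff averages of Dirac
measures along `P`-orbits is `P`-invariant, then all sufficiently long Birkhoff sums of `φ`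
along orbits in the domain are below `-c`. -/
theorem stmt0
    {X : Type*} [MetricSpace X] [CompactSpace X] [MeasurableSpace X] [BorelSpace X]
    (P : X → X) (dom : Set X) (hdomMeas : MeasurableSet dom) (hPmeas : Measurable P)
    (φ : X → ℝ) (hφ : Continuous φ) (c : ℝ) (hc : 0 < c)
    (hint : ∀ ν : Measure X, IsProbabilityMeasure ν → ν.map P = ν →
      ∫ x, φ x ∂ν < -c)
    (hacc : ∀ μ : Measure X, IsProbabilityMeasure μ →
      ∀ (n : ℕ → ℕ) (x : ℕ → X),
        (∀ j, 1 ≤ n j) →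
        (∀ j, ∀ k, k < n j - 1 → P^[k] (x j) ∈ dom) →
        Tendsto n atTop atTop →
        (∀ f : C(X, ℝ), Tendsto
          (fun j => (∑ k ∈ Finset.range (n j), f (P^[k] (x j))) / (n j : ℝ))
          atTop (𝓝 (∫ x, f x ∂μ))) →
        μ.map P = μ) :
    ∃ N : ℕ, ∀ n : ℕ, N < n → ∀ x : X,
      (∀ k, k < n - 1 → P^[k] x ∈ dom) →
      (∑ k ∈ Finset.range n, φ (P^[k] x)) / (n : ℝ) < -c :=
  stmt0_general P dom φ hφ c hint hacc
end

section
/- Let Σ be a compact metric space and P : dom(P) ⊆ Σ → Σ a map. Suppose that for every ε > 0 there exist δ > 0 and N ∈ ℕ such that: for every point p ∈ Σ and every open set I containing p of diameter less than δ, for all n ≥ N and all x ∈ dom(P^{n-1}), one has (1/n) ∑_{k=0}^{n-1} χ_I(P^k(x)) < ε. Then any weak* accumulation point μ of a sequence of measures μ_j = (1/n_j) ∑_{k=0}^{n_j-1} δ_{P^k(x_{n_j})} (with n_j ≥ 1, n_j → ∞, and x_{n_j} ∈ dom(P^{n_j - 1})) is non-atomic, i.e., μ({p}) = 0 for every p ∈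 Σ, provided each point p admits arbitrarily small open neighborhoods I_p with μ(∂I_p) = 0. -/
open MeasureTheory Filter Topology Set Function
open scoped Classical

/-! Fix a point `p` and `ε > 0`, and take the `δ` and `N` of the hypothesis together with an open
neighbourhood `I` of `p` of diameter `< δ`. An Urysohn function `f` with `𝟙_{p} ≤ f ≤ 𝟙_I` gives
`μ {p} ≤ ∫ f dμ`, while each Birkhoff average of `f` with `n j ≥ N` is at most the fraction of
time the orbit spends in `I`, hence `< ε`. Passing to the limit, `μ {p} ≤ ε`. -/

theorem exists_continuous_indicator_le_le_indicator {X : Type*} [TopologicalSpace X]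
    [NormalSpace X] {s U : Set X} (hs : IsClosed s) (hU : IsOpen U) (hsU : s ⊆ U) :
    ∃ f : C(X, ℝ), s.indicator 1 ≤ ⇑f ∧ ⇑f ≤ U.indicator 1 := by
  obtain ⟨f, hf0, hf1, hf01⟩ := exists_continuous_zero_one_of_isClosed hU.isClosed_compl hs
    (disjoint_compl_left_iff_subset.2 hsU)
  refine ⟨f, fun a => ?_, fun a => ?_⟩
  · by_cases ha : a ∈ s
    · simp [indicator_of_mem ha, hf1 ha]
    · simpa [indicator_of_notMem ha] using (hf01 a).1
  · by_cases ha : a ∈ U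
    · simpa [indicator_of_mem ha] using (hf01 a).2
    · simp [indicator_of_notMem ha, hf0 ha]

theorem measureReal_le_integral_of_indicator_le {X : Type*} [MeasurableSpace X] {μ : Measure X}
    [IsFiniteMeasure μ] {s : Set X} {f : X → ℝ} (hs : MeasurableSet s) (hf : Integrable f μ)
    (hsf : s.indicator 1 ≤ f) : μ.real s ≤ ∫ a, f a ∂μ := by
  rw [← integral_indicator_one hs]
  exact integral_mono ((integrable_const 1).indicator hs) hf hsf

theorem Finset.sum_comp_le_card_filter_of_le_indicator {ι X : Type*} {U : Set X} {f : X → ℝ}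
    (hf : f ≤ U.indicator 1) (s : Finset ι) (g : ι → X) :
    ∑ k ∈ s, f (g k) ≤ (s.filter (fun k => g k ∈ U)).card := by
  rw [Finset.natCast_card_filter]
  exact Finset.sum_le_sum fun k _ => (hf (g k)).trans_eq (by simp [indicator_apply])

theorem stmt3_general
    {X : Type*} [MetricSpace X] [CompactSpace X] [MeasurableSpace X] [BorelSpace X]
    (P : X → X) (dom : Set X)
    (hP : ∀ ε : ℝ, 0 < ε → ∃ δ : ℝ, 0 < δ ∧ ∃ N : ℕ, ∀ p : X, ∀ I : Set X,
      IsOpen I → p ∈ I → Metric.diam I < δ → ∀ n : ℕ, N ≤ n → ∀ x : X,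
        (∀ k, k < n - 1 → P^[k] x ∈ dom) →
        (((Finset.range n).filter (fun k => P^[k] x ∈ I)).card : ℝ) / (n : ℝ) < ε)
    (n : ℕ → ℕ) (x : ℕ → X) (hnt : Tendsto n atTop atTop)
    (hx : ∀ j, ∀ k, k < n j - 1 → P^[k] (x j) ∈ dom)
    (μ : Measure X) (hμ : IsProbabilityMeasure μ)
    (hconv : ∀ f : C(X, ℝ), Tendsto
      (fun j => (∑ k ∈ Finset.range (n j), f (P^[k] (x j))) / (n j : ℝ))
      atTop (𝓝 (∫ a, f a ∂μ)))
    (hnbhd : ∀ p : X, ∀ r : ℝ, 0 < r → ∃ I : Set X,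
      IsOpen I ∧ p ∈ I ∧ Metric.diam I < r ∧ μ (frontier I) = 0) :
    ∀ p : X, μ {p} = 0 := by
  intro p
  suffices h : ∀ ε > 0, μ.real {p} ≤ ε from
    (measureReal_eq_zero_iff).1 (le_antisymm (le_of_forall_gt_imp_ge_of_dense h) measureReal_nonneg)
  intro ε hε
  obtain ⟨δ, hδ, N, hN⟩ := hP ε hε
  obtain ⟨I, hIo, hpI, hId, -⟩ := hnbhd p δ hδ
  obtain ⟨f, hpf, hfI⟩ :=
    exists_continuous_indicator_le_le_indicator isClosed_singleton hIo (singleton_subset_iff.2 hpI)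
  have hf : Integrable f μ :=
    f.continuous.integrable_of_hasCompactSupport (HasCompactSupport.of_compactSpace f)
  refine (measureReal_le_integral_of_indicator_le (measurableSet_singleton p) hf hpf).trans ?_
  refine le_of_tendsto (hconv f) ((hnt.eventually_ge_atTop N).mono fun j hj => ?_)
  calc (∑ k ∈ Finset.range (n j), f (P^[k] (x j))) / (n j : ℝ)
      ≤ (((Finset.range (n j)).filter (fun k => P^[k] (x j) ∈ I)).card : ℝ) / (n j : ℝ) := by
        gcongr
        exact Finset.sum_comp_le_card_filter_of_le_indicator hfI _ _
    _ ≤ ε := (hN p I hIo hpI hId (n j) hj (x j) (hx j)).le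

/-- Non-atomicity of weak* limits of Birkhoff averages of Dirac measures, given that
orbits spend an arbitrarily small fraction of time in sufficiently small open sets,
provided every point admits arbitrarily small open neighborhoods with `μ`-null boundary. -/
theorem stmt3
    {X : Type*} [MetricSpace X] [CompactSpace X] [MeasurableSpace X] [BorelSpace X]
    (P : X → X) (dom : Set X)
    (hP : ∀ ε : ℝ, 0 < ε → ∃ δ : ℝ, 0 < δ ∧ ∃ N : ℕ, ∀ p : X, ∀ I : Set X,
      IsOpen I → p ∈ I → Metric.diam I < δ → ∀ n : ℕ, N ≤ n → ∀ x : X,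
        (∀ k, k < n - 1 → P^[k] x ∈ dom) →
        (((Finset.range n).filter (fun k => P^[k] x ∈ I)).card : ℝ) / (n : ℝ) < ε)
    (n : ℕ → ℕ) (x : ℕ → X) (hn : ∀ j, 1 ≤ n j) (hnt : Tendsto n atTop atTop)
    (hx : ∀ j, ∀ k, k < n j - 1 → P^[k] (x j) ∈ dom)
    (μ : Measure X) (hμ : IsProbabilityMeasure μ)
    (hconv : ∀ f : C(X, ℝ), Tendsto
      (fun j => (∑ k ∈ Finset.range (n j), f (P^[k] (x j))) / (n j : ℝ))
      atTop (𝓝 (∫ a, f a ∂μ)))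
    (hnbhd : ∀ p : X, ∀ r : ℝ, 0 < r → ∃ I : Set X,
      IsOpen I ∧ p ∈ I ∧ Metric.diam I < r ∧ μ (frontier I) = 0) :
    ∀ p : X, μ {p} = 0 :=
  stmt3_general P dom hP n x hnt hx μ hμ hconv hnbhd
end

section
/- With hypotheses as in the shifted-orbit estimate (P an infinitesimal κ-contraction with 0 < κ < 0.1, E_1(x) - x = δ for x ∈ [-4δ, 4δ] and E_1(x) - x ≤ δ everywhere, δ > 0): if N ∈ ℕ is such that P^N(q) ∈ [-κδ, 0] and P ∘ (E_1 ∘ P)^{N-1}(q) ∈ [-4δ, 4δ], then (E_1 ∘ P)^N(q) ≥ -3κδ + δ > 0. Consequently, since (E_0 ∘ P)^N(q) = P^N(q) ≤ 0 and λ ↦ (E_λ ∘ P)^N(q) is continuous, there exists λ ∈ [0,1] with (E_λ ∘ P)^N(q) = 0. -/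
/-!
The last step of the `N`-fold shifted orbit lands in `[-4δ, 4δ]`, where `E_1` is the
translation by `δ`; since that step is within `κδ/(1-κ) ≤ 2κδ` of `P^N(q) ≥ -κδ`, the
orbit ends at least `δ - 3κδ > 0`. At `λ = 0` the orbit is the unperturbed one, ending at
`P^N(q) ≤ 0`, so the intermediate value theorem in `λ` gives a zero.
-/

open Filter Set Function

lemma div_one_sub_le_two_mul {a κ : ℝ} (ha : 0 ≤ a) (hκ : κ ≤ 1 / 2) :
    a / (1 - κ) ≤ 2 * a := by
  rw [div_le_iff₀ (by linarith)]
  nlinarith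

lemma neg_three_mul_le_of_abs_sub_le {κ δ p y : ℝ} (hκ0 : 0 ≤ κ) (hκ : κ ≤ 1 / 2) (hδ : 0 ≤ δ)
    (hp : -(κ * δ) ≤ p) (hyp : |y - p| ≤ κ * δ / (1 - κ)) : -(3 * κ * δ) ≤ y := by
  have := div_one_sub_le_two_mul (mul_nonneg hκ0 hδ) hκ
  linarith [(abs_le.mp hyp).1]

lemma iterate_comp_of_forall_eq_id {E : ℝ → ℝ} (hE : ∀ x, E x = x) (P : ℝ → ℝ) (n : ℕ) :
    (fun x => E (P x))^[n] = P^[n] := by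
  simp only [hE]

theorem stmt9_general (κ δ : ℝ) (hκ0 : 0 < κ) (hκ : κ < 0.1) (hδ : 0 < δ)
    (P : ℝ → ℝ) (E : ℝ → ℝ → ℝ)
    (hE0 : ∀ x, E 0 x = x)
    (hEeq : ∀ lam ∈ Set.Icc (0:ℝ) 1, ∀ x ∈ Set.Icc (-(4*δ)) (4*δ), E lam x - x = lam * δ)
    (q : ℝ) (N : ℕ) (hN : 1 ≤ N)
    (hcont : Continuous fun lam => (fun x => E lam (P x))^[N] q)
    (hest : |P ((fun x => E 1 (P x))^[N-1] q) - P^[N] q| ≤ κ * δ / (1 - κ))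
    (hPN : P^[N] q ∈ Set.Icc (-(κ*δ)) 0)
    (hIn : P ((fun x => E 1 (P x))^[N-1] q) ∈ Set.Icc (-(4*δ)) (4*δ)) :
    ((fun x => E 1 (P x))^[N] q ≥ -3*κ*δ + δ ∧ 0 < -3*κ*δ + δ) ∧
      ∃ lam ∈ Set.Icc (0:ℝ) 1, (fun x => E lam (P x))^[N] q = 0 := by
  set y := P ((fun x => E 1 (P x))^[N-1] q)
  have hlast : (fun x => E 1 (P x))^[N] q = y + δ := by
    rw [← comp_iterate_pred_of_pos _ hN, comp_apply, ← Nat.sub_one]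
    linarith [hEeq 1 (right_mem_Icc.mpr zero_le_one) y hIn]
  have hy : -(3 * κ * δ) ≤ y :=
    neg_three_mul_le_of_abs_sub_le hκ0.le (by norm_num at hκ; linarith) hδ.le hPN.1 hest
  have hpos : 0 < -3 * κ * δ + δ := by norm_num at hκ; nlinarith
  have hge : (fun x => E 1 (P x))^[N] q ≥ -3 * κ * δ + δ := by rw [hlast]; linarith
  refine ⟨⟨hge, hpos⟩, intermediate_value_Icc zero_le_one hcont.continuousOn ⟨?_, ?_⟩⟩
  · simpa only [iterate_comp_of_forall_eq_id hE0] using hPN.2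
  · exact hpos.le.trans hge

/-- Final step of the proof of Lemma `lem10`: if `P^N(q) ∈ [-κδ, 0]` and the shifted
orbit estimate holds, then `(E_1 ∘ P)^N(q) ≥ -3κδ + δ > 0`; hence by continuity in `λ`
and `E_0 = id` there is `λ ∈ [0,1]` with `(E_λ ∘ P)^N(q) = 0`. -/
theorem stmt9 (κ δ : ℝ) (hκ0 : 0 < κ) (hκ : κ < 0.1) (hδ : 0 < δ)
    (P : ℝ → ℝ) (E : ℝ → ℝ → ℝ)
    (hE0 : ∀ x, E 0 x = x)
    (hEeq : ∀ lam ∈ Set.Icc (0:ℝ) 1, ∀ x ∈ Set.Icc (-(4*δ)) (4*δ), E lam x - x = lam * δ)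
    (hEle : ∀ lam ∈ Set.Icc (0:ℝ) 1, ∀ x : ℝ, E lam x - x ≤ lam * δ)
    (q : ℝ) (N : ℕ) (hN : 1 ≤ N)
    (hcont : Continuous fun lam => (fun x => E lam (P x))^[N] q)
    (hest : |P ((fun x => E 1 (P x))^[N-1] q) - P^[N] q| ≤ κ * δ / (1 - κ))
    (hPN : P^[N] q ∈ Set.Icc (-(κ*δ)) 0)
    (hIn : P ((fun x => E 1 (P x))^[N-1] q) ∈ Set.Icc (-(4*δ)) (4*δ)) :
    ((fun x => E 1 (P x))^[N] q ≥ -3*κ*δ + δ ∧ 0 < -3*κ*δ + δ) ∧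
      ∃ lam ∈ Set.Icc (0:ℝ) 1, (fun x => E lam (P x))^[N] q = 0 :=
  stmt9_general κ δ hκ0 hκ hδ P E hE0 hEeq q N hN hcont hest hPN hIn
end
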